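/- Any 3-dimensional multiplicative Heisenberg Hom-Lie superalgebra on the superspace with basis {u | v, h} (u even; v, h odd) with derived ideal generated by h ∈ Z(g) and bracket [u,v] = h is isomorphic, by conjugating α with an even bracket automorphism, to one with α diagonal α = diag(μ₀, μ₁₁, μ₀μ₁₁), or to one with α(u) = μ₀ u, α(v) = μ₁₁ v + h, α(h) = μ₁₁ h where (μ₀ - 1)μ₁₁ = 0. -/

import Mathlib

namespace Stmt4

/-- V = ℂ³ with basis u = e₀ (even), v = e₁, h = e₂ (odd). -/
abbrev V : Type := Fin 3 → ℂ

/-- super bracket: [u,v] = h = -[v,u], all other brackets of basis elements zero.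
This is the 3-dimensional Heisenberg super structure with derived ideal ℂh. -/
def br (x y : V) : V := ![0, 0, x 0 * y 1 - x 1 * y 0]

/-- the diagonal structure map diag(μ₀, μ₁₁, μ₀μ₁₁). -/
def ad (μ0 μ11 : ℂ) (x : V) : V := ![μ0 * x 0, μ11 * x 1, μ0 * μ11 * x 2]

/-- the structure map u ↦ μ₀u, v ↦ μ₁₁v + h, h ↦ μ₁₁h. -/
def be (μ0 μ11 : ℂ) (x : V) : V := ![μ0 * x 0, μ11 * x 1, x 1 + μ11 * x 2]

def IsLin (f : V → V) : Prop := ∀ (c : ℂ) (x y : V), f (c • x + y) = c • f x + f y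

/-- even map: preserves the grading (coord 0 even, coords 1,2 odd). -/
def IsEven (f : V → V) : Prop :=
  ∀ x : V, ((x 1 = 0 ∧ x 2 = 0) → ((f x) 1 = 0 ∧ (f x) 2 = 0)) ∧ (x 0 = 0 → (f x) 0 = 0)

/-- the conjugating automorphism family -/
def Phi (p r : ℂ) (x : V) : V := ![p * x 0, x 1, r * x 1 + p * x 2]

lemma Phi_lin (p r : ℂ) : IsLin (Phi p r) := by
  intro c x y
  funext i
  fin_cases i <;> simp [Phi] <;> ring

lemma Phi_even (p r : ℂ) : IsEven (Phi p r) := by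
  intro x
  constructor
  · rintro ⟨h1, h2⟩
    constructor <;> simp [Phi, h1, h2]
  · intro h0
    simp [Phi, h0]

lemma Phi_bij (p r : ℂ) (hp : p ≠ 0) : Function.Bijective (Phi p r) := by
  rw [Function.bijective_iff_has_inverse]
  refine ⟨Phi (1/p) (-r/p), ?_, ?_⟩ <;>
  · intro x
    funext i
    fin_cases i <;> simp [Phi] <;> field_simp <;> ring

lemma Phi_br (p r : ℂ) (x y : V) : Phi p r (br x y) = br (Phi p r x) (Phi p r y) := by
  funext i
  fin_cases i <;> simp [Phi, br] <;> ring

lemma lin_zero (f : V → V) (hf : IsLin f) : f 0 = 0 := by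
  have h := hf (-1) 0 0
  simpa using h

lemma lin_apply (f : V → V) (hf : IsLin f) (x : V) :
    f x = x 0 • f ![1,0,0] + (x 1 • f ![0,1,0] + (x 2 • f ![0,0,1] + 0)) := by
  have hx : x = x 0 • ![(1:ℂ),0,0] + (x 1 • ![0,1,0] + (x 2 • ![0,0,1] + 0)) := by
    funext i; fin_cases i <;> simp
  calc f x = f (x 0 • ![(1:ℂ),0,0] + (x 1 • ![0,1,0] + (x 2 • ![0,0,1] + 0))) := by rw [← hx]
    _ = _ := by
      rw [hf, hf, hf, lin_zero f hf]

/-- Any 3-dimensional multiplicative Heisenberg Hom-Lie superalgebra on {u | v, h}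
with bracket [u,v] = h is isomorphic (via conjugation of α by an even bracket
automorphism) to one with α = diag(μ₀,μ₁₁,μ₀μ₁₁) or with
α : u ↦ μ₀u, v ↦ μ₁₁v + h, h ↦ μ₁₁h, (μ₀-1)μ₁₁ = 0. -/
theorem stmt4 (α : V → V) (hlin : IsLin α) (heven : IsEven α)
    (hmult : ∀ x y : V, α (br x y) = br (α x) (α y)) :
    ∃ φ : V → V, IsLin φ ∧ IsEven φ ∧ Function.Bijective φ ∧
      (∀ x y : V, φ (br x y) = br (φ x) (φ y)) ∧
      ∃ μ0 μ11 : ℂ,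
        (∀ x : V, φ (α x) = ad μ0 μ11 (φ x)) ∨
        (((μ0 - 1) * μ11 = 0) ∧ ∀ x : V, φ (α x) = be μ0 μ11 (φ x)) := by
  set a : ℂ := α ![1,0,0] 0 with ha
  set c : ℂ := α ![0,1,0] 1 with hc
  set d : ℂ := α ![0,1,0] 2 with hd
  have hu : α ![1,0,0] = ![a, 0, 0] := by
    have h := (heven ![1,0,0]).1 (by exact ⟨rfl, rfl⟩)
    funext i; fin_cases i <;> simp [ha, h.1, h.2]
  have hv : α ![0,1,0] = ![0, c, d] := by
    have h := (heven ![0,1,0]).2 (by norm_num)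
    funext i; fin_cases i <;> simp [hc, hd, h]
  have hbr : br ![(1:ℂ),0,0] ![0,1,0] = ![0,0,1] := by
    funext i; fin_cases i <;> simp [br]
  have hh : α ![0,0,1] = ![0, 0, a * c] := by
    have h := hmult ![1,0,0] ![0,1,0]
    rw [hbr, hu, hv] at h
    rw [h]
    funext i; fin_cases i <;> simp [br]
  have hαx : ∀ x : V, α x = ![a * x 0, c * x 1, d * x 1 + a * c * x 2] := by
    intro x
    rw [lin_apply α hlin x, hu, hv, hh]
    funext i; fin_cases i <;> simp <;> ring
  by_cases hd0 : d = 0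
  · -- diagonal already
    refine ⟨Phi 1 0, Phi_lin 1 0, Phi_even 1 0, Phi_bij 1 0 one_ne_zero, Phi_br 1 0,
      a, c, Or.inl ?_⟩
    intro x
    rw [hαx]
    funext i; fin_cases i <;> simp [Phi, ad, hd0] <;> ring
  · by_cases hca : c * (a - 1) = 0
    · -- be-form, p = 1/d
      refine ⟨Phi (1/d) 0, Phi_lin _ _, Phi_even _ _, Phi_bij _ _ (by simp [hd0]),
        Phi_br _ _, a, c, Or.inr ⟨by linear_combination hca, ?_⟩⟩
      intro x
      rw [hαx]
      funext i; fin_cases i <;> simp [Phi, be] <;> field_simp <;> linear_combination (x 2) * hca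
    · -- diagonalizable: r = d / (c * (a-1))
      refine ⟨Phi 1 (d / (c * (a - 1))), Phi_lin _ _, Phi_even _ _,
        Phi_bij _ _ one_ne_zero, Phi_br _ _, a, c, Or.inl ?_⟩
      intro x
      rw [hαx]
      funext i; fin_cases i <;> simp [Phi, ad] <;> linear_combination (-(d * x 1)) * div_self hca

end Stmt4
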